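/- In the ring R, the images of a₁ and of a₃ are not zero divisors: for every r ∈ R, a₁·r = 0 implies r = 0, and a₃·r = 0 implies r = 0. -/

import Mathlib

open MvPolynomial

noncomputable section

/-- `c = a₁⁶ + a₁³a₃ + a₃²` in `P = ℤ_[2][a₁, a₃, a₆]` (with `X 0 = a₁`, `X 1 = a₃`, `X 2 = a₆`). -/
def cpoly : MvPolynomial (Fin 3) ℤ_[2] := (X 0) ^ 6 + (X 0) ^ 3 * X 1 + (X 1) ^ 2

/-- `f = a₆² + a₆·c + c² − (5/9)·a₁⁶·c` in `P`. -/
def fpoly : MvPolynomial (Fin 3) ℤ_[2] :=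
  (X 2) ^ 2 + X 2 * cpoly + cpoly ^ 2 - C (5 * Ring.inverse 9) * (X 0) ^ 6 * cpoly

/-- `R = P/(f)`, the ring of automorphic forms on the double cover `𝒴`. -/
abbrev RD : Type := MvPolynomial (Fin 3) ℤ_[2] ⧸ Ideal.span {fpoly}

/-- The image of `a₁` in `R`. -/
def b₁ : RD := Ideal.Quotient.mk _ (X 0)
/-- The image of `a₃` in `R`. -/
def b₃ : RD := Ideal.Quotient.mk _ (X 1)
/-- The image of `a₆` in `R`. -/
def b₆ : RD := Ideal.Quotient.mk _ (X 2)

/-!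
Splitting off `a₆` writes `P = S[a₆]` with `S = ℤ_[2][a₁, a₃]`, and `f` is monic of
degree 2 in `a₆`. Hence `R` is a free `S`-module (with basis `1, a₆`), so multiplication
on `R` by any nonzero element of the domain `S`, such as `a₁` or `a₃`, is injective.
-/

open scoped Polynomial nonZeroDivisors

theorem Polynomial.Monic.algebraMap_mem_nonZeroDivisors_quotient {S : Type*} [CommRing S]
    {g : S[X]} (hg : g.Monic) {s : S} (hs : s ∈ S⁰) :
    algebraMap S (S[X] ⧸ Ideal.span {g}) s ∈ (S[X] ⧸ Ideal.span {g})⁰ := by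
  have := hg.free_quotient
  refine mem_nonZeroDivisors_iff_right.mpr fun x hx => ?_
  rwa [mul_comm, ← Algebra.smul_def,
    (isRegular_iff_mem_nonZeroDivisors.mpr hs).smul_eq_zero_iff_right] at hx

theorem Ideal.Quotient.mk_mem_nonZeroDivisors_of_ringEquiv_monic {A S : Type*} [CommRing A]
    [CommRing S] (e : A ≃+* S[X]) {p : A} (hp : (e p).Monic) {a : A} {s : S}
    (ha : e a = Polynomial.C s) (hs : s ∈ S⁰) :
    Ideal.Quotient.mk (Ideal.span {p}) a ∈ (A ⧸ Ideal.span {p})⁰ := by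
  let ψ := Ideal.quotientEquiv _ (Ideal.span {e p}) e (by
    rw [Ideal.map_span, Set.image_singleton]; rfl)
  have hψ : ψ (Ideal.Quotient.mk _ a) = algebraMap S _ s := by
    rw [Ideal.quotientEquiv_mk, ha]
    rfl
  refine mem_nonZeroDivisors_iff_right.mpr fun x hx => ψ.injective ?_
  rw [map_zero]
  refine (hp.algebraMap_mem_nonZeroDivisors_quotient hs).2 _ ?_
  rw [← hψ, ← map_mul, hx, map_zero]

namespace MvPolynomial

variable (R : Type*) [CommSemiring R] (n : ℕ)

def finLastEquiv : MvPolynomial (Fin (n + 1)) R ≃ₐ[R] (MvPolynomial (Fin n) R)[X] :=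
  (renameEquiv R (finSuccEquiv' (Fin.last n))).trans (optionEquivLeft R (Fin n))

variable {R n}

@[simp]
theorem finLastEquiv_X_last : finLastEquiv R n (X (Fin.last n)) = Polynomial.X := by
  simp [finLastEquiv, optionEquivLeft_X_none]

@[simp]
theorem finLastEquiv_X_castSucc (i : Fin n) :
    finLastEquiv R n (X i.castSucc) = Polynomial.C (X i) := by
  simp [finLastEquiv, finSuccEquiv'_last_apply_castSucc, optionEquivLeft_X_some]

@[simp]
theorem finLastEquiv_C (r : R) : finLastEquiv R n (C r) = Polynomial.C (C r) := by
  simp [finLastEquiv, optionEquivLeft_C]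

end MvPolynomial

theorem monic_finLastEquiv_fpoly : (finLastEquiv ℤ_[2] 2 fpoly).Monic := by
  have h₀ : finLastEquiv ℤ_[2] 2 (X 0) = Polynomial.C (X 0) := finLastEquiv_X_castSucc 0
  have h₁ : finLastEquiv ℤ_[2] 2 (X 1) = Polynomial.C (X 1) := finLastEquiv_X_castSucc 1
  have h₂ : finLastEquiv ℤ_[2] 2 (X 2) = Polynomial.X := finLastEquiv_X_last
  simp only [fpoly, cpoly, map_add, map_sub, map_mul, map_pow, h₀, h₁, h₂, finLastEquiv_C]
  monicity!

/-- In `R`, the images of `a₁` and `a₃` are not zero divisors. -/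
theorem a₁_a₃_not_zeroDivisors :
    (∀ r : RD, b₁ * r = 0 → r = 0) ∧ (∀ r : RD, b₃ * r = 0 → r = 0) := by
  have h (i : Fin 2) : Ideal.Quotient.mk (Ideal.span {fpoly}) (X i.castSucc) ∈ RD⁰ :=
    Ideal.Quotient.mk_mem_nonZeroDivisors_of_ringEquiv_monic (finLastEquiv ℤ_[2] 2).toRingEquiv
      monic_finLastEquiv_fpoly (finLastEquiv_X_castSucc i)
      (mem_nonZeroDivisors_of_ne_zero (X_ne_zero i))
  exact ⟨(h 0).1, (h 1).1⟩
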